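/- arXiv:2509.18064 — 4 statements merged into one kernel-verified Lean document; each statement's English description precedes it below -/
import Mathlib

section
/- Applying the amplitude damping channel m₁ times locally on both qubits of the Bell state Φ+ = |Φ+⟩⟨Φ+| yields the state (1/4)[I⊗I + a(X⊗X − Y⊗Y) + (1−a)(I⊗Z + Z⊗I) + ((1−a)² + a²) Z⊗Z], where a = (1-γ)^{m₁}. -/
open Matrix Kronecker BigOperators

noncomputable section

def pI : Matrix (Fin 2) (Fin 2) ℂ := 1
def pX : Matrix (Fin 2) (Fin 2) ℂ := !![0, 1; 1, 0]
def pY : Matrix (Fin 2) (Fin 2) ℂ := !![0, -Complex.I; Complex.I, 0]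
def pZ : Matrix (Fin 2) (Fin 2) ℂ := !![1, 0; 0, -1]

def K0 (γ : ℝ) : Matrix (Fin 2) (Fin 2) ℂ := !![1, 0; 0, (Real.sqrt (1 - γ) : ℂ)]
def K1 (γ : ℝ) : Matrix (Fin 2) (Fin 2) ℂ := !![0, (Real.sqrt γ : ℂ); 0, 0]

/-- The amplitude damping channel on one qubit. -/
def AD (γ : ℝ) (ρ : Matrix (Fin 2) (Fin 2) ℂ) : Matrix (Fin 2) (Fin 2) ℂ :=
  K0 γ * ρ * (K0 γ)ᴴ + K1 γ * ρ * (K1 γ)ᴴ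

abbrev Q2 := Fin 2 × Fin 2

/-- The Bell state |Φ⁺⟩ = (|00⟩+|11⟩)/√2. -/
def φplus : Q2 → ℂ := fun p => if p.1 = p.2 then ((Real.sqrt 2 : ℂ))⁻¹ else 0

/-- |Φxz⟩ = (I ⊗ XˣZᶻ)|Φ⁺⟩. -/
def bell (x z : Fin 2) : Q2 → ℂ :=
  ((1 : Matrix (Fin 2) (Fin 2) ℂ) ⊗ₖ (pX ^ (x : ℕ) * pZ ^ (z : ℕ))).mulVec φplus

/-- |v⟩⟨w|. -/
def outer (v w : Q2 → ℂ) : Matrix Q2 Q2 ℂ := vecMulVec v (star w)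

/-- |v⟩⟨v|. -/
def proj (v : Q2 → ℂ) : Matrix Q2 Q2 ℂ := outer v v

/-- The amplitude damping channel acting locally on both qubits. -/
def AD2 (γ : ℝ) (ρ : Matrix Q2 Q2 ℂ) : Matrix Q2 Q2 ℂ :=
  (K0 γ ⊗ₖ K0 γ) * ρ * (K0 γ ⊗ₖ K0 γ)ᴴ + (K0 γ ⊗ₖ K1 γ) * ρ * (K0 γ ⊗ₖ K1 γ)ᴴ +
  (K1 γ ⊗ₖ K0 γ) * ρ * (K1 γ ⊗ₖ K0 γ)ᴴ + (K1 γ ⊗ₖ K1 γ) * ρ * (K1 γ ⊗ₖ K1 γ)ᴴ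

/-- Three-parameter link state. -/
def σ3 (c1 c2 c3 : ℝ) : Matrix Q2 Q2 ℂ :=
  (c1 : ℂ) • proj (bell 0 0) + (c2 : ℂ) • proj (bell 0 1) +
  (c3 : ℂ) • (outer (bell 0 0) (bell 0 1) + outer (bell 0 1) (bell 0 0)) +
  (((1 - c1 - c2) / 2 : ℝ) : ℂ) • (proj (bell 1 0) + proj (bell 1 1))

/-- Four-parameter AQN link state. -/
def σ4 (h1 h2 h3 h4 : ℝ) : Matrix Q2 Q2 ℂ :=
  σ3 h1 h2 h3 + (h4 : ℂ) • (outer (bell 1 0) (bell 1 1) + outer (bell 1 1) (bell 1 0))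

abbrev Q4 := Q2 × Q2

/-- ⟨Φxz|_{Q₁Q₂} ⊗ XˣZᶻ_R as a matrix from the four-qubit space P Q₁ Q₂ R to P R. -/
def braB (x z : Fin 2) : Matrix Q2 Q4 ℂ :=
  Matrix.of fun pr q =>
    (if pr.1 = q.1.1 then (1 : ℂ) else 0) *
      (starRingEnd ℂ) (bell x z (q.1.2, q.2.1)) * (pX ^ (x : ℕ) * pZ ^ (z : ℕ)) pr.2 q.2.2

/-- The entanglement swapping map. -/
def swapMap (ρ : Matrix Q4 Q4 ℂ) : Matrix Q2 Q2 ℂ :=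
  ∑ x : Fin 2, ∑ z : Fin 2, braB x z * ρ * (braB x z)ᴴ

/-!
The states `ρ(a) = ¼[I⊗I + a(X⊗X − Y⊗Y) + (1−a)(I⊗Z + Z⊗I) + ((1−a)² + a²) Z⊗Z]`
(`dampedBell a`) start at `ρ(1) = Φ⁺`. The single-qubit channel acts on the Pauli matrices by
`I ↦ I + γZ`, `X ↦ √(1−γ) X`, `Y ↦ √(1−γ) Y`, `Z ↦ (1−γ) Z`, and the two-qubit channel acts on
product operators as `AD ⊗ AD`. Expanding shows that it maps `ρ(a)` to `ρ((1−γ)a)`; iterating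
gives `a = (1−γ)^m₁`.
-/

section AmplitudeDamping

lemma conjTranspose_K0 (γ : ℝ) : (K0 γ)ᴴ = K0 γ := by
  ext i j
  fin_cases i <;> fin_cases j <;> simp [K0]

lemma conjTranspose_K1 (γ : ℝ) : (K1 γ)ᴴ = !![0, 0; (Real.sqrt γ : ℂ), 0] := by
  ext i j
  fin_cases i <;> fin_cases j <;> simp [K1]

variable {γ : ℝ} (h0 : 0 ≤ γ) (h1 : γ ≤ 1)
include h0 h1

lemma AD_fin_two (a b c d : ℂ) :
    AD γ !![a, b; c, d] =
      !![a + γ * d, Real.sqrt (1 - γ) * b; Real.sqrt (1 - γ) * c, (1 - γ) * d] := by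
  have hs : (Real.sqrt γ : ℂ) * Real.sqrt γ = γ := mod_cast Real.mul_self_sqrt h0
  have hc : (Real.sqrt (1 - γ) : ℂ) * Real.sqrt (1 - γ) = 1 - γ := by
    exact_mod_cast Real.mul_self_sqrt (sub_nonneg.2 h1)
  rw [AD, conjTranspose_K0, conjTranspose_K1, K0, K1]
  simp only [mul_fin_two]
  ext i j
  fin_cases i <;> fin_cases j <;> simp
  · linear_combination d * hs
  · ring
  · linear_combination d * hc

lemma AD_pI : AD γ pI = pI + (γ : ℂ) • pZ := by
  rw [pI, one_fin_two, AD_fin_two h0 h1, pZ]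
  ext i j
  fin_cases i <;> fin_cases j <;> simp [sub_eq_add_neg]

lemma AD_pX : AD γ pX = (Real.sqrt (1 - γ) : ℂ) • pX := by
  rw [pX, AD_fin_two h0 h1]
  ext i j
  fin_cases i <;> fin_cases j <;> simp

lemma AD_pY : AD γ pY = (Real.sqrt (1 - γ) : ℂ) • pY := by
  rw [pY, AD_fin_two h0 h1]
  ext i j
  fin_cases i <;> fin_cases j <;> simp

lemma AD_pZ : AD γ pZ = (1 - γ : ℂ) • pZ := by
  rw [pZ, AD_fin_two h0 h1]
  ext i j
  fin_cases i <;> fin_cases j <;> simp [sub_eq_add_neg]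

end AmplitudeDamping

section LocalAmplitudeDamping

variable (γ : ℝ)

lemma AD2_kronecker (A B : Matrix (Fin 2) (Fin 2) ℂ) :
    AD2 γ (A ⊗ₖ B) = AD γ A ⊗ₖ AD γ B := by
  simp only [AD2, AD, conjTranspose_kronecker, ← mul_kronecker_mul, add_kronecker,
    kronecker_add]
  abel

lemma AD2_add (A B : Matrix Q2 Q2 ℂ) : AD2 γ (A + B) = AD2 γ A + AD2 γ B := by
  simp only [AD2, Matrix.mul_add, Matrix.add_mul]
  abel

lemma AD2_sub (A B : Matrix Q2 Q2 ℂ) : AD2 γ (A - B) = AD2 γ A - AD2 γ B := by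
  simp only [AD2, Matrix.mul_sub, Matrix.sub_mul]
  abel

lemma AD2_smul (c : ℂ) (A : Matrix Q2 Q2 ℂ) : AD2 γ (c • A) = c • AD2 γ A := by
  simp only [AD2, Matrix.mul_smul, Matrix.smul_mul, smul_add]

end LocalAmplitudeDamping

def dampedBell (a : ℝ) : Matrix Q2 Q2 ℂ :=
  (1 / 4 : ℂ) • (pI ⊗ₖ pI + (a : ℂ) • (pX ⊗ₖ pX - pY ⊗ₖ pY) +
    ((1 - a : ℝ) : ℂ) • (pI ⊗ₖ pZ + pZ ⊗ₖ pI) + (((1 - a) ^ 2 + a ^ 2 : ℝ) : ℂ) • (pZ ⊗ₖ pZ))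

lemma bell_zero_zero : bell 0 0 = φplus := by
  simp [bell]

lemma proj_φplus : proj φplus = dampedBell 1 := by
  have h : ((Real.sqrt 2 : ℂ))⁻¹ * ((Real.sqrt 2 : ℂ))⁻¹ = 1 / 2 := by
    rw [← mul_inv, ← Complex.ofReal_mul, Real.mul_self_sqrt zero_le_two]
    norm_num
  ext ⟨i, j⟩ ⟨k, l⟩
  fin_cases i <;> fin_cases j <;> fin_cases k <;> fin_cases l
  all_goals
    simp [proj, outer, φplus, dampedBell, pI, pX, pY, pZ, vecMulVec_apply, one_apply]
  all_goals linear_combination h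

section

variable {γ : ℝ} (h0 : 0 ≤ γ) (h1 : γ ≤ 1)
include h0 h1

lemma AD2_dampedBell (a : ℝ) : AD2 γ (dampedBell a) = dampedBell ((1 - γ) * a) := by
  have hc : (Real.sqrt (1 - γ) : ℂ) * Real.sqrt (1 - γ) = 1 - γ := by
    exact_mod_cast Real.mul_self_sqrt (sub_nonneg.2 h1)
  simp only [dampedBell, AD2_smul, AD2_add, AD2_sub, AD2_kronecker, AD_pI h0 h1, AD_pX h0 h1,
    AD_pY h0 h1, AD_pZ h0 h1, add_kronecker, kronecker_add, smul_kronecker, kronecker_smul,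
    smul_smul, hc]
  module

lemma iterate_AD2_dampedBell (a : ℝ) (m : ℕ) :
    (AD2 γ)^[m] (dampedBell a) = dampedBell ((1 - γ) ^ m * a) := by
  induction m with
  | zero => simp
  | succ m ih =>
    rw [Function.iterate_succ_apply', ih, AD2_dampedBell h0 h1, pow_succ', mul_assoc]

end

/-- m₁-fold local amplitude damping on both qubits of Φ⁺, in the Pauli basis. -/
theorem adc_on_bell_pauli_form (γ : ℝ) (h0 : 0 ≤ γ) (h1 : γ ≤ 1) (m₁ : ℕ) :
    (AD2 γ)^[m₁] (proj (bell 0 0)) =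
      (1 / 4 : ℂ) • (pI ⊗ₖ pI + (((1 - γ) ^ m₁ : ℝ) : ℂ) • (pX ⊗ₖ pX - pY ⊗ₖ pY) +
        ((1 - (1 - γ) ^ m₁ : ℝ) : ℂ) • (pI ⊗ₖ pZ + pZ ⊗ₖ pI) +
        (((1 - (1 - γ) ^ m₁) ^ 2 + ((1 - γ) ^ m₁) ^ 2 : ℝ) : ℂ) • (pZ ⊗ₖ pZ)) := by
  rw [bell_zero_zero, proj_φplus, iterate_AD2_dampedBell h0 h1, mul_one]
  rfl
end
end

section
/- The state obtained by applying amplitude damping m₁ times to both qubits of Φ+ equals c₁Φ00 + c₂Φ01 + c₃(|Φ00⟩⟨Φ01| + |Φ01⟩⟨Φ00|) + (1/2)(1−c₁−c₂)(Φ10 + Φ11), with c₁ = (1+a²)/2, c₂ = (1−a)²/2, c₃ = (1−a)/2 and a = (1-γ)^{m₁}. -/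
open Matrix Kronecker BigOperators

noncomputable section

def ρa (a : ℝ) : Matrix Q2 Q2 ℂ := Matrix.of fun p q =>
  if p = (0,0) ∧ q = (0,0) then ((1 + (1-a)^2)/2 : ℝ)
  else if (p = (0,1) ∧ q = (0,1)) ∨ (p = (1,0) ∧ q = (1,0)) then (a*(1-a)/2 : ℝ)
  else if p = (1,1) ∧ q = (1,1) then (a^2/2 : ℝ)
  else if (p = (0,0) ∧ q = (1,1)) ∨ (p = (1,1) ∧ q = (0,0)) then (a/2 : ℝ)
  else 0

lemma bell00 (p : Q2) : bell 0 0 p = if p.1 = p.2 then ((Real.sqrt 2 : ℂ))⁻¹ else 0 := by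
  obtain ⟨i, j⟩ := p
  fin_cases i <;> fin_cases j <;>
    simp [bell, mulVec, dotProduct, Fintype.sum_prod_type, Fin.sum_univ_two,
      kroneckerMap_apply, Matrix.one_apply, pX, pZ, φplus, Prod.ext_iff]

lemma bell01 (p : Q2) : bell 0 1 p =
    if p = (0,0) then ((Real.sqrt 2 : ℂ))⁻¹ else if p = (1,1) then -((Real.sqrt 2 : ℂ))⁻¹ else 0 := by
  obtain ⟨i, j⟩ := p
  fin_cases i <;> fin_cases j <;>
    simp [bell, mulVec, dotProduct, Fintype.sum_prod_type, Fin.sum_univ_two,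
      kroneckerMap_apply, Matrix.one_apply, pX, pZ, φplus, Prod.ext_iff]

lemma bell10 (p : Q2) : bell 1 0 p =
    if p = (0,1) then ((Real.sqrt 2 : ℂ))⁻¹ else if p = (1,0) then ((Real.sqrt 2 : ℂ))⁻¹ else 0 := by
  obtain ⟨i, j⟩ := p
  fin_cases i <;> fin_cases j <;>
    simp [bell, mulVec, dotProduct, Fintype.sum_prod_type, Fin.sum_univ_two,
      kroneckerMap_apply, Matrix.one_apply, pX, pZ, φplus, Prod.ext_iff]

lemma bell11 (p : Q2) : bell 1 1 p =
    if p = (0,1) then ((Real.sqrt 2 : ℂ))⁻¹ else if p = (1,0) then -((Real.sqrt 2 : ℂ))⁻¹ else 0 := by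
  obtain ⟨i, j⟩ := p
  fin_cases i <;> fin_cases j <;>
    simp [bell, mulVec, dotProduct, Fintype.sum_prod_type, Fin.sum_univ_two,
      kroneckerMap_apply, Matrix.one_apply, pX, pZ, φplus, Prod.ext_iff]

lemma sqrt2_sq : ((Real.sqrt 2 : ℝ) : ℂ) * ((Real.sqrt 2 : ℝ) : ℂ) = 2 := by
  rw [← Complex.ofReal_mul, Real.mul_self_sqrt (by norm_num)]
  norm_num

set_option maxHeartbeats 2000000 in
lemma σ3_eq_ρa (a : ℝ) :
    σ3 ((1 + a ^ 2) / 2) ((1 - a) ^ 2 / 2) ((1 - a) / 2) = ρa a := by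
  ext p q
  obtain ⟨i, j⟩ := p; obtain ⟨k, l⟩ := q
  fin_cases i <;> fin_cases j <;> fin_cases k <;> fin_cases l <;>
    simp [σ3, ρa, proj, outer, vecMulVec, bell00, bell01, bell10, bell11,
        Matrix.add_apply, Matrix.smul_apply, Prod.ext_iff, map_inv₀, Complex.conj_ofReal] <;>
    (field_simp; simp only [sq, sqrt2_sq]; push_cast; ring)

lemma ρa_one : ρa 1 = proj (bell 0 0) := by
  ext p q
  obtain ⟨i, j⟩ := p; obtain ⟨k, l⟩ := q
  fin_cases i <;> fin_cases j <;> fin_cases k <;> fin_cases l <;>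
    simp [ρa, proj, outer, vecMulVec, bell00, Prod.ext_iff, map_inv₀, Complex.conj_ofReal] <;>
    (field_simp; simp only [sq, sqrt2_sq])

set_option maxHeartbeats 2000000 in
lemma AD2_ρa (γ : ℝ) (h0 : 0 ≤ γ) (h1 : γ ≤ 1) (a : ℝ) :
    AD2 γ (ρa a) = ρa ((1 - γ) * a) := by
  have hg : ((Real.sqrt γ : ℝ) : ℂ) ^ 2 = (γ : ℂ) := by
    rw [sq, ← Complex.ofReal_mul, Real.mul_self_sqrt h0]
  have hg' : ((Real.sqrt (1 - γ) : ℝ) : ℂ) ^ 2 = ((1 - γ : ℝ) : ℂ) := by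
    rw [sq, ← Complex.ofReal_mul, Real.mul_self_sqrt (by linarith)]
  have hg4 : ((Real.sqrt γ : ℝ) : ℂ) ^ 4 = (γ : ℂ) ^ 2 := by
    rw [show (4 : ℕ) = 2 * 2 by rfl, pow_mul, hg]
  have hg'4 : ((Real.sqrt (1 - γ) : ℝ) : ℂ) ^ 4 = ((1 - γ : ℝ) : ℂ) ^ 2 := by
    rw [show (4 : ℕ) = 2 * 2 by rfl, pow_mul, hg']
  ext p q
  obtain ⟨i, j⟩ := p; obtain ⟨k, l⟩ := q
  fin_cases i <;> fin_cases j <;> fin_cases k <;> fin_cases l <;>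
    simp [AD2, ρa, K0, K1, Matrix.mul_apply, Fintype.sum_prod_type, Fin.sum_univ_two,
      kroneckerMap_apply, conjTranspose_apply, Prod.ext_iff, Complex.conj_ofReal]
  all_goals ring_nf
  all_goals simp only [hg, hg', hg4, hg'4]
  all_goals push_cast
  all_goals ring_nf

/-- m₁-fold local amplitude damping on both qubits of Φ⁺ in the Bell basis:
the three-parameter form with c₁ = (1+a²)/2, c₂ = (1−a)²/2, c₃ = (1−a)/2, a = (1-γ)^m₁. -/
theorem adc_on_bell_three_parameter (γ : ℝ) (h0 : 0 ≤ γ) (h1 : γ ≤ 1) (m₁ : ℕ) :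
    (AD2 γ)^[m₁] (proj (bell 0 0)) =
      σ3 ((1 + ((1 - γ) ^ m₁) ^ 2) / 2) ((1 - (1 - γ) ^ m₁) ^ 2 / 2) ((1 - (1 - γ) ^ m₁) / 2) := by
  have key : ∀ m : ℕ, (AD2 γ)^[m] (proj (bell 0 0)) = ρa ((1 - γ) ^ m) := by
    intro m
    induction m with
    | zero => simp only [Function.iterate_zero, id_eq, pow_zero]; rw [ρa_one]
    | succ n ih =>
        rw [Function.iterate_succ_apply', ih, AD2_ρa γ h0 h1, ← pow_succ']
  rw [key, σ3_eq_ρa]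
end
end

section
/- For a two-qubit X-state ρ with diagonal (a,b,c,d), a+b+c+d = 1, and anti-diagonal entries w (positions (1,4),(4,1) with w real) and z (positions (2,3),(3,2) with z real), the concurrence equals 2·max(0, |z| − √(ad), |w| − √(bc)). -/
open Matrix Kronecker BigOperators

noncomputable section

namespace XStateAux
open Polynomial

def qe : Q2 ≃ Fin 4 where
  toFun p := ⟨2 * p.1.1 + p.2.1, by have := p.1.isLt; have := p.2.isLt; omega⟩
  invFun i := (⟨i.1 / 2, by omega⟩, ⟨i.1 % 2, by omega⟩)
  left_inv := by decide
  right_inv := by decide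

def Xmat (a b c d w z : ℝ) : Matrix Q2 Q2 ℂ :=
  Matrix.of (fun p q : Q2 =>
      if p = q then
        (if p = (0, 0) then (a : ℂ) else if p = (0, 1) then (b : ℂ)
         else if p = (1, 0) then (c : ℂ) else (d : ℂ))
      else if (p = (0, 0) ∧ q = (1, 1)) ∨ (p = (1, 1) ∧ q = (0, 0)) then (w : ℂ)
      else if (p = (0, 1) ∧ q = (1, 0)) ∨ (p = (1, 0) ∧ q = (0, 1)) then (z : ℂ)
      else 0)

def N4m (a b c d w z : ℝ) : Matrix (Fin 4) (Fin 4) ℂ :=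
  !![-(w:ℂ), 0, 0, -(a:ℂ); 0, (z:ℂ), (b:ℂ), 0; 0, (c:ℂ), (z:ℂ), 0; -(d:ℂ), 0, 0, -(w:ℂ)]

def R4m (a b c d w z : ℝ) : Matrix (Fin 4) (Fin 4) ℂ :=
  !![((a*d+w^2 : ℝ):ℂ), 0, 0, ((2*a*w:ℝ):ℂ); 0, ((b*c+z^2:ℝ):ℂ), ((2*b*z:ℝ):ℂ), 0;
     0, ((2*c*z:ℝ):ℂ), ((b*c+z^2:ℝ):ℂ), 0; ((2*d*w:ℝ):ℂ), 0, 0, ((a*d+w^2:ℝ):ℂ)]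

lemma dotAD (a b c d w z t : ℝ) :
    (star (fun p : Q2 => if p = ((0:Fin 2),(0:Fin 2)) then (t:ℂ)
            else if p = ((1:Fin 2),(1:Fin 2)) then 1 else 0) ⬝ᵥ
        (Xmat a b c d w z) *ᵥ (fun p : Q2 => if p = ((0:Fin 2),(0:Fin 2)) then (t:ℂ)
            else if p = ((1:Fin 2),(1:Fin 2)) then 1 else 0))
      = ((a*(t*t) + (2*w)*t + d : ℝ) : ℂ) := by
  simp [Xmat, dotProduct, Matrix.mulVec, Fintype.sum_prod_type, Fin.sum_univ_two,
    Prod.ext_iff, apply_ite (starRingEnd ℂ), Complex.conj_ofReal]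
  push_cast
  ring

lemma dotBC (a b c d w z t : ℝ) :
    (star (fun p : Q2 => if p = ((0:Fin 2),(1:Fin 2)) then (t:ℂ)
            else if p = ((1:Fin 2),(0:Fin 2)) then 1 else 0) ⬝ᵥ
        (Xmat a b c d w z) *ᵥ (fun p : Q2 => if p = ((0:Fin 2),(1:Fin 2)) then (t:ℂ)
            else if p = ((1:Fin 2),(0:Fin 2)) then 1 else 0))
      = ((b*(t*t) + (2*z)*t + c : ℝ) : ℂ) := by
  simp [Xmat, dotProduct, Matrix.mulVec, Fintype.sum_prod_type, Fin.sum_univ_two,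
    Prod.ext_iff, apply_ite (starRingEnd ℂ), Complex.conj_ofReal]
  push_cast
  ring

lemma conjX (a b c d w z : ℝ) :
    (Xmat a b c d w z).map (starRingEnd ℂ) = Xmat a b c d w z := by
  ext p q
  simp only [Xmat, Matrix.map_apply, Matrix.of_apply]
  split_ifs <;> simp [Complex.conj_ofReal]

lemma mulY (a b c d w z : ℝ) :
    Xmat a b c d w z * (pY ⊗ₖ pY) = (Matrix.reindex qe qe).symm (N4m a b c d w z) := by
  have e00 : qe ((0:Fin 2),(0:Fin 2)) = (0 : Fin 4) := rfl
  have e01 : qe ((0:Fin 2),(1:Fin 2)) = (1 : Fin 4) := rfl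
  have e10 : qe ((1:Fin 2),(0:Fin 2)) = (2 : Fin 4) := rfl
  have e11 : qe ((1:Fin 2),(1:Fin 2)) = (3 : Fin 4) := rfl
  have f00 : qe (0 : Q2) = (0 : Fin 4) := rfl
  have f11 : qe (1 : Q2) = (3 : Fin 4) := rfl
  ext ⟨p1,p2⟩ ⟨q1,q2⟩
  rw [Matrix.reindex_symm, Matrix.reindex_apply, Matrix.submatrix_apply, Equiv.symm_symm]
  fin_cases p1 <;> fin_cases p2 <;> fin_cases q1 <;> fin_cases q2 <;>
    simp [Xmat, N4m, Matrix.mul_apply, Fintype.sum_prod_type, Fin.sum_univ_two, pY,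
      e00, e01, e10, e11, f00, f11, Prod.ext_iff]

lemma N4sq (a b c d w z : ℝ) : N4m a b c d w z * N4m a b c d w z = R4m a b c d w z := by
  ext i j
  fin_cases i <;> fin_cases j <;>
    simp [N4m, R4m, Matrix.mul_apply, Fin.sum_univ_four] <;> push_cast <;> ring

lemma charpoly4 (u v s t p q : ℂ) :
    (!![u,0,0,s; 0,v,p,0; 0,q,v,0; t,0,0,u] : Matrix (Fin 4) (Fin 4) ℂ).charpoly =
      ((X - C u)^2 - C (s*t)) * ((X - C v)^2 - C (p*q)) := by
  have hcm : charmatrix (!![u,0,0,s; 0,v,p,0; 0,q,v,0; t,0,0,u] : Matrix (Fin 4) (Fin 4) ℂ) =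
      !![X - C u, 0, 0, -C s; 0, X - C v, -C p, 0; 0, -C q, X - C v, 0; -C t, 0, 0, X - C u] := by
    ext i j
    fin_cases i <;> fin_cases j <;>
      simp [charmatrix_apply, Matrix.diagonal]
  rw [Matrix.charpoly, hcm]
  have h2 : (Fin.castSucc 2 : Fin 4) = 2 := rfl
  have h1 : (Fin.castSucc 1 : Fin 4) = 1 := rfl
  have h0 : (Fin.castSucc 0 : Fin 4) = 0 := rfl
  have h3 : (Fin.succAbove (3 : Fin 4) (2 : Fin 3)) = (2 : Fin 4) := rfl
  simp [Matrix.det_succ_row_zero, Fin.sum_univ_succ, h0, h1, h2, h3]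
  ring

lemma quad (r1 r2 u c : ℂ) (h : r1 + r2 = 2*u) (h2 : r1*r2 = u^2 - c) :
    (X - C r1)*(X - C r2) = (X - C u)^2 - C c := by
  have e1 : (C (r1+r2) : ℂ[X]) = C (2*u) := by rw [h]
  have e2 : (C (r1*r2) : ℂ[X]) = C (u^2 - c) := by rw [h2]
  simp only [map_add, _root_.map_mul, map_sub, map_pow, map_ofNat] at e1 e2
  linear_combination (-X) * e1 + e2

lemma cpX (a b c d w z : ℝ) :
    (Xmat a b c d w z * (pY ⊗ₖ pY) * (Xmat a b c d w z).map (starRingEnd ℂ)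
        * (pY ⊗ₖ pY)).charpoly =
      ((X - C ((a*d+w^2:ℝ):ℂ))^2 - C (((2*a*w:ℝ):ℂ) * ((2*d*w:ℝ):ℂ))) *
      ((X - C ((b*c+z^2:ℝ):ℂ))^2 - C (((2*b*z:ℝ):ℂ) * ((2*c*z:ℝ):ℂ))) := by
  rw [conjX, mul_assoc (Xmat a b c d w z * (pY ⊗ₖ pY)), mulY]
  rw [Matrix.reindex_symm, Matrix.reindex_apply, Equiv.symm_symm]
  rw [Matrix.submatrix_mul_equiv (N4m a b c d w z) (N4m a b c d w z) _ qe _, N4sq]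
  have hre : (R4m a b c d w z).submatrix ⇑qe ⇑qe
      = Matrix.reindex qe.symm qe.symm (R4m a b c d w z) := by
    rw [Matrix.reindex_apply, Equiv.symm_symm]
  rw [hre, Matrix.charpoly_reindex, R4m, charpoly4]

end XStateAux

open scoped ComplexOrder in
/-- Concurrence of a two-qubit X-state: for any decreasing list of eigenvalues (with
multiplicity) of ρ(σy⊗σy)ρ*(σy⊗σy), the concurrence formula
max(0, √λ₁−√λ₂−√λ₃−√λ₄) evaluates to 2·max(0, |z|−√(ad), |w|−√(bc)). -/
theorem xstate_concurrence (a b c d w z : ℝ)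
    (ha : 0 ≤ a) (hb : 0 ≤ b) (hc : 0 ≤ c) (hd : 0 ≤ d) (hsum : a + b + c + d = 1)
    (ρ : Matrix Q2 Q2 ℂ)
    (hρ : ρ = Matrix.of (fun p q : Q2 =>
      if p = q then
        (if p = (0, 0) then (a : ℂ) else if p = (0, 1) then (b : ℂ)
         else if p = (1, 0) then (c : ℂ) else (d : ℂ))
      else if (p = (0, 0) ∧ q = (1, 1)) ∨ (p = (1, 1) ∧ q = (0, 0)) then (w : ℂ)
      else if (p = (0, 1) ∧ q = (1, 0)) ∨ (p = (1, 0) ∧ q = (0, 1)) then (z : ℂ)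
      else 0))
    (hpsd : ρ.PosSemidef)
    (lam : Fin 4 → ℝ) (hlam : Antitone lam)
    (hchar : (ρ * (pY ⊗ₖ pY) * ρ.map (starRingEnd ℂ) * (pY ⊗ₖ pY)).charpoly =
      ∏ i : Fin 4, (Polynomial.X - Polynomial.C ((lam i : ℝ) : ℂ))) :
    max 0 (Real.sqrt (lam 0) - Real.sqrt (lam 1) - Real.sqrt (lam 2) - Real.sqrt (lam 3)) =
      2 * max (max 0 (|z| - Real.sqrt (a * d))) (|w| - Real.sqrt (b * c)) := by
  classical
  have hX : ρ = XStateAux.Xmat a b c d w z := hρ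
  -- positivity constraints from PSD
  have had : w^2 ≤ a*d := by
    have hq : ∀ t : ℝ, 0 ≤ a*(t*t) + (2*w)*t + d := by
      intro t
      have h := hpsd.dotProduct_mulVec_nonneg (fun p => if p = ((0:Fin 2),(0:Fin 2)) then (t:ℂ)
        else if p = ((1:Fin 2),(1:Fin 2)) then 1 else 0)
      rw [hX, XStateAux.dotAD a b c d w z t] at h
      exact Complex.zero_le_real.mp h
    have hdis := discrim_le_zero hq
    rw [discrim] at hdis
    nlinarith
  have hbc : z^2 ≤ b*c := by
    have hq : ∀ t : ℝ, 0 ≤ b*(t*t) + (2*z)*t + c := by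
      intro t
      have h := hpsd.dotProduct_mulVec_nonneg (fun p => if p = ((0:Fin 2),(1:Fin 2)) then (t:ℂ)
        else if p = ((1:Fin 2),(0:Fin 2)) then 1 else 0)
      rw [hX, XStateAux.dotBC a b c d w z t] at h
      exact Complex.zero_le_real.mp h
    have hdis := discrim_le_zero hq
    rw [discrim] at hdis
    nlinarith
  set α := Real.sqrt (a*d) with hαdef
  set β := Real.sqrt (b*c) with hβdef
  have hα2 : α^2 = a*d := Real.sq_sqrt (mul_nonneg ha hd)
  have hβ2 : β^2 = b*c := Real.sq_sqrt (mul_nonneg hb hc)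
  have hα0 : 0 ≤ α := Real.sqrt_nonneg _
  have hβ0 : 0 ≤ β := Real.sqrt_nonneg _
  have hαw : |w| ≤ α := by
    have h := Real.sqrt_le_sqrt had
    rwa [Real.sqrt_sq_eq_abs] at h
  have hβz : |z| ≤ β := by
    have h := Real.sqrt_le_sqrt hbc
    rwa [Real.sqrt_sq_eq_abs] at h
  set μ : Fin 4 → ℝ := ![(α+|w|)^2, (α-|w|)^2, (β+|z|)^2, (β-|z|)^2] with hμdef
  have m0 : μ 0 = (α+|w|)^2 := rfl
  have m1 : μ 1 = (α-|w|)^2 := rfl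
  have m2 : μ 2 = (β+|z|)^2 := rfl
  have m3 : μ 3 = (β-|z|)^2 := rfl
  -- charpoly in factored form
  have hcp := XStateAux.cpX a b c d w z
  rw [← hX] at hcp
  -- product over μ
  have q1 : (Polynomial.X - Polynomial.C ((μ 0 : ℝ):ℂ)) * (Polynomial.X - Polynomial.C ((μ 1 : ℝ):ℂ))
      = (Polynomial.X - Polynomial.C ((a*d+w^2:ℝ):ℂ))^2
        - Polynomial.C (((2*a*w:ℝ):ℂ) * ((2*d*w:ℝ):ℂ)) := by
    apply XStateAux.quad
    · rw [m0, m1]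
      have hr : (α+|w|)^2 + (α-|w|)^2 = 2*(a*d+w^2) := by
        linear_combination 2*hα2 + 2*(sq_abs w)
      exact_mod_cast hr
    · rw [m0, m1]
      have hr : (α+|w|)^2 * (α-|w|)^2 = (a*d+w^2)^2 - (2*a*w)*(2*d*w) := by
        linear_combination (α^2 - |w|^2 + a*d - w^2) * hα2 - (α^2 - |w|^2 + a*d - w^2) * sq_abs w
      exact_mod_cast hr
  have q2 : (Polynomial.X - Polynomial.C ((μ 2 : ℝ):ℂ)) * (Polynomial.X - Polynomial.C ((μ 3 : ℝ):ℂ))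
      = (Polynomial.X - Polynomial.C ((b*c+z^2:ℝ):ℂ))^2
        - Polynomial.C (((2*b*z:ℝ):ℂ) * ((2*c*z:ℝ):ℂ)) := by
    apply XStateAux.quad
    · rw [m2, m3]
      have hr : (β+|z|)^2 + (β-|z|)^2 = 2*(b*c+z^2) := by
        linear_combination 2*hβ2 + 2*(sq_abs z)
      exact_mod_cast hr
    · rw [m2, m3]
      have hr : (β+|z|)^2 * (β-|z|)^2 = (b*c+z^2)^2 - (2*b*z)*(2*c*z) := by
        linear_combination (β^2 - |z|^2 + b*c - z^2) * hβ2 - (β^2 - |z|^2 + b*c - z^2) * sq_abs z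
      exact_mod_cast hr
  have hμprod : ∏ i : Fin 4, (Polynomial.X - Polynomial.C ((μ i : ℝ) : ℂ)) =
      ((Polynomial.X - Polynomial.C ((a*d+w^2:ℝ):ℂ))^2
        - Polynomial.C (((2*a*w:ℝ):ℂ) * ((2*d*w:ℝ):ℂ))) *
      ((Polynomial.X - Polynomial.C ((b*c+z^2:ℝ):ℂ))^2
        - Polynomial.C (((2*b*z:ℝ):ℂ) * ((2*c*z:ℝ):ℂ))) := by
    rw [Fin.prod_univ_four, mul_assoc, q1, q2]
  have hprod : ∏ i : Fin 4, (Polynomial.X - Polynomial.C ((lam i : ℝ) : ℂ)) =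
      ∏ i : Fin 4, (Polynomial.X - Polynomial.C ((μ i : ℝ) : ℂ)) := by
    rw [← hchar, hcp]
    exact hμprod.symm
  -- from the polynomial identity to multiset equality
  have h1 : ((Finset.univ.val.map (fun i : Fin 4 => ((lam i:ℝ):ℂ))).map
      (fun x => Polynomial.X - Polynomial.C x)).prod
      = ∏ i : Fin 4, (Polynomial.X - Polynomial.C ((lam i : ℝ) : ℂ)) := by
    rw [Multiset.map_map, Finset.prod_eq_multiset_prod]
    rfl
  have h2 : ((Finset.univ.val.map (fun i : Fin 4 => ((μ i:ℝ):ℂ))).map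
      (fun x => Polynomial.X - Polynomial.C x)).prod
      = ∏ i : Fin 4, (Polynomial.X - Polynomial.C ((μ i : ℝ) : ℂ)) := by
    rw [Multiset.map_map, Finset.prod_eq_multiset_prod]
    rfl
  have hroots := congrArg Polynomial.roots ((h1.trans hprod).trans h2.symm)
  rw [Polynomial.roots_multiset_prod_X_sub_C, Polynomial.roots_multiset_prod_X_sub_C] at hroots
  have hms : Finset.univ.val.map lam = Finset.univ.val.map μ := by
    apply Multiset.map_injective Complex.ofReal_injective
    simpa [Multiset.map_map, Function.comp] using hroots
  have hsums : ∑ i : Fin 4, Real.sqrt (lam i) = ∑ i : Fin 4, Real.sqrt (μ i) := by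
    have h := congrArg (fun s => (Multiset.map Real.sqrt s).sum) hms
    simpa [Multiset.map_map, Finset.sum_eq_multiset_sum, Function.comp] using h
  have hmem0 : ∃ j, μ j = lam 0 := by
    have h : lam 0 ∈ Finset.univ.val.map μ := by
      rw [← hms]
      exact Multiset.mem_map.mpr ⟨0, by simp, rfl⟩
    rcases Multiset.mem_map.mp h with ⟨j, _, hj⟩
    exact ⟨j, hj⟩
  have hle0 : ∀ i, μ i ≤ lam 0 := by
    intro i
    have h : μ i ∈ Finset.univ.val.map lam := by
      rw [hms]
      exact Multiset.mem_map.mpr ⟨i, by simp, rfl⟩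
    rcases Multiset.mem_map.mp h with ⟨k, _, hk⟩
    rw [← hk]
    exact hlam (Fin.zero_le k)
  -- square roots of μ
  have s0 : Real.sqrt (μ 0) = α + |w| := by
    rw [m0]; exact Real.sqrt_sq (by positivity)
  have s1 : Real.sqrt (μ 1) = α - |w| := by
    rw [m1]; exact Real.sqrt_sq (by linarith)
  have s2 : Real.sqrt (μ 2) = β + |z| := by
    rw [m2]; exact Real.sqrt_sq (by positivity)
  have s3 : Real.sqrt (μ 3) = β - |z| := by
    rw [m3]; exact Real.sqrt_sq (by linarith)
  have hsum4 : Real.sqrt (lam 0) + Real.sqrt (lam 1) + Real.sqrt (lam 2) + Real.sqrt (lam 3)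
      = 2*α + 2*β := by
    have h := hsums
    rw [Fin.sum_univ_four, Fin.sum_univ_four, s0, s1, s2, s3] at h
    linarith
  have hmax : Real.sqrt (lam 0) = max (α+|w|) (β+|z|) := by
    apply le_antisymm
    · obtain ⟨j, hj⟩ := hmem0
      rw [← hj]
      have hb0 : Real.sqrt (μ 0) ≤ max (α+|w|) (β+|z|) := by
        rw [s0]; exact le_max_left _ _
      have hb1 : Real.sqrt (μ 1) ≤ max (α+|w|) (β+|z|) := by
        rw [s1]; exact le_trans (by linarith [abs_nonneg w]) (le_max_left (α+|w|) (β+|z|))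
      have hb2 : Real.sqrt (μ 2) ≤ max (α+|w|) (β+|z|) := by
        rw [s2]; exact le_max_right _ _
      have hb3 : Real.sqrt (μ 3) ≤ max (α+|w|) (β+|z|) := by
        rw [s3]; exact le_trans (by linarith [abs_nonneg z]) (le_max_right (α+|w|) (β+|z|))
      fin_cases j
      · exact hb0
      · exact hb1
      · exact hb2
      · exact hb3
    · apply max_le
      · rw [← s0]; exact Real.sqrt_le_sqrt (hle0 0)
      · rw [← s2]; exact Real.sqrt_le_sqrt (hle0 2)
  have key : Real.sqrt (lam 0) - Real.sqrt (lam 1) - Real.sqrt (lam 2) - Real.sqrt (lam 3)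
      = 2 * max (α+|w|) (β+|z|) - (2*α + 2*β) := by
    linarith [hsum4, hmax]
  rw [key]
  simp only [max_def]
  split_ifs <;> linarith [abs_nonneg w, abs_nonneg z]
end
end

section
/- Applying the amplitude damping channel n₁ times locally to both qubits of a four-parameter state σ(f₁,f₂,f₃,f₄) yields σ(f̃₁,f̃₂,f̃₃,f̃₄) with f̃₁ = (1/4)[f₁(1+2t+t₊) + f₂(1−2t+t₊) + 2f₅(1+t₋) + 4f₃t(1−t)], f̃₂ = (1/4)[f₁(1−2t+t₊) + f₂(1+2t+t₊) + 2f₅(1+t₋) + 4f₃t(1−t)], f̃₃ = (1−t)/2 + t f₃, f̃₄ = f₄ t, where t = (1−γ)^{n₁}, t₊ = (1−t)² + t², t₋ = (1−t)² − t², f₅ = (1−f₁−f₂)/2; in particular the four-parameter family is closed under local amplitude damping noise. -/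
/-!
In the computational basis every `σ4 f₁ f₂ f₃ f₄` is an X-shaped matrix: populations on
`|00⟩, |01⟩, |10⟩, |11⟩` and one coherence between `|00⟩` and `|11⟩`. Local amplitude damping
preserves this shape and acts linearly on the five entries, pushing population towards `|00⟩`.
The resulting recurrences solve in closed form in `t = (1 - γ)ⁿ`, and reading the result back
in the Bell basis gives the stated parameters.
-/

open Matrix Kronecker BigOperators

noncomputable section

def xMatrix (a b c d e : ℂ) : Matrix Q2 Q2 ℂ :=
  a • single (0, 0) (0, 0) 1 + b • (single (0, 0) (1, 1) 1 + single (1, 1) (0, 0) 1) +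
    c • single (0, 1) (0, 1) 1 + d • single (1, 0) (1, 0) 1 + e • single (1, 1) (1, 1) 1

lemma bell_zero_zero_s14 : bell 0 0 = fun p => if p = (0, 0) ∨ p = (1, 1) then (√2 : ℂ)⁻¹ else 0 := by
  funext ⟨i, j⟩
  fin_cases i <;> fin_cases j <;>
    simp [bell, φplus, pX, pZ, mulVec, dotProduct, Fintype.sum_prod_type, one_apply]

lemma bell_zero_one :
    bell 0 1 = fun p => if p = (0, 0) then (√2 : ℂ)⁻¹ else if p = (1, 1) then -(√2 : ℂ)⁻¹ else 0 := by
  funext ⟨i, j⟩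
  fin_cases i <;> fin_cases j <;>
    simp [bell, φplus, pX, pZ, mulVec, dotProduct, Fintype.sum_prod_type, one_apply]

lemma bell_one_zero : bell 1 0 = fun p => if p = (0, 1) ∨ p = (1, 0) then (√2 : ℂ)⁻¹ else 0 := by
  funext ⟨i, j⟩
  fin_cases i <;> fin_cases j <;>
    simp [bell, φplus, pX, pZ, mulVec, dotProduct, Fintype.sum_prod_type, one_apply]

lemma bell_one_one :
    bell 1 1 = fun p => if p = (0, 1) then (√2 : ℂ)⁻¹ else if p = (1, 0) then -(√2 : ℂ)⁻¹ else 0 := by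
  funext ⟨i, j⟩
  fin_cases i <;> fin_cases j <;>
    simp [bell, φplus, pX, pZ, mulVec, dotProduct, Fintype.sum_prod_type, one_apply]

lemma σ4_eq_xMatrix (f1 f2 f3 f4 : ℝ) :
    σ4 f1 f2 f3 f4 = xMatrix ((f1 + f2) / 2 + f3) ((f1 - f2) / 2) ((1 - f1 - f2) / 2 + f4)
      ((1 - f1 - f2) / 2 - f4) ((f1 + f2) / 2 - f3) := by
  have sqrt_two_inv_mul_self : (√2 : ℂ)⁻¹ * (√2 : ℂ)⁻¹ = 1 / 2 := by
    rw [← mul_inv, ← Complex.ofReal_mul, Real.mul_self_sqrt zero_le_two]; norm_num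
  ext ⟨i, j⟩ ⟨k, l⟩
  fin_cases i <;> fin_cases j <;> fin_cases k <;> fin_cases l <;>
    simp [σ4, σ3, proj, outer, xMatrix, bell_zero_zero_s14, bell_zero_one, bell_one_zero, bell_one_one,
      vecMulVec_apply, sqrt_two_inv_mul_self] <;>
    ring

lemma AD2_xMatrix {γ : ℝ} (h0 : 0 ≤ γ) (h1 : γ ≤ 1) (a b c d e : ℂ) :
    AD2 γ (xMatrix a b c d e) =
      xMatrix (a + γ * (c + d) + γ ^ 2 * e) ((1 - γ) * b) ((1 - γ) * (c + γ * e))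
        ((1 - γ) * (d + γ * e)) ((1 - γ) ^ 2 * e) := by
  rw [show (1 - γ : ℂ) = √(1 - γ) * √(1 - γ) by
      rw [← Complex.ofReal_mul, Real.mul_self_sqrt (sub_nonneg.2 h1)]; push_cast; ring,
    show (γ : ℂ) = √γ * √γ by rw [← Complex.ofReal_mul, Real.mul_self_sqrt h0]]
  ext ⟨i, j⟩ ⟨k, l⟩
  fin_cases i <;> fin_cases j <;> fin_cases k <;> fin_cases l <;>
    simp [AD2, xMatrix, K0, K1, mul_apply, Fintype.sum_prod_type, single_apply] <;>
    ring

lemma AD2_iterate_xMatrix {γ : ℝ} (h0 : 0 ≤ γ) (h1 : γ ≤ 1) (n : ℕ) (a b c d e : ℂ) :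
    (AD2 γ)^[n] (xMatrix a b c d e) =
      xMatrix (a + (1 - (1 - γ) ^ n) * (c + d) + (1 - (1 - γ) ^ n) ^ 2 * e) ((1 - γ) ^ n * b)
        ((1 - γ) ^ n * (c + (1 - (1 - γ) ^ n) * e)) ((1 - γ) ^ n * (d + (1 - (1 - γ) ^ n) * e))
        (((1 - γ) ^ n) ^ 2 * e) := by
  induction n with
  | zero => simp
  | succ n ih =>
    rw [Function.iterate_succ_apply', ih, AD2_xMatrix h0 h1]
    congr 1 <;> ring

/-- AD noise update rule: the four-parameter family is closed under n₁-fold local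
amplitude damping on both qubits, with the stated coefficient update. -/
theorem adc_noise_update_rule (γ : ℝ) (h0 : 0 ≤ γ) (h1 : γ ≤ 1) (n₁ : ℕ)
    (f1 f2 f3 f4 : ℝ) :
    (AD2 γ)^[n₁] (σ4 f1 f2 f3 f4) =
      σ4 ((f1 * (1 + 2 * (1 - γ) ^ n₁ + ((1 - (1 - γ) ^ n₁) ^ 2 + ((1 - γ) ^ n₁) ^ 2)) +
           f2 * (1 - 2 * (1 - γ) ^ n₁ + ((1 - (1 - γ) ^ n₁) ^ 2 + ((1 - γ) ^ n₁) ^ 2)) +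
           2 * ((1 - f1 - f2) / 2) * (1 + ((1 - (1 - γ) ^ n₁) ^ 2 - ((1 - γ) ^ n₁) ^ 2)) +
           4 * f3 * (1 - γ) ^ n₁ * (1 - (1 - γ) ^ n₁)) / 4)
         ((f1 * (1 - 2 * (1 - γ) ^ n₁ + ((1 - (1 - γ) ^ n₁) ^ 2 + ((1 - γ) ^ n₁) ^ 2)) +
           f2 * (1 + 2 * (1 - γ) ^ n₁ + ((1 - (1 - γ) ^ n₁) ^ 2 + ((1 - γ) ^ n₁) ^ 2)) +
           2 * ((1 - f1 - f2) / 2) * (1 + ((1 - (1 - γ) ^ n₁) ^ 2 - ((1 - γ) ^ n₁) ^ 2)) +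
           4 * f3 * (1 - γ) ^ n₁ * (1 - (1 - γ) ^ n₁)) / 4)
         ((1 - (1 - γ) ^ n₁) / 2 + (1 - γ) ^ n₁ * f3)
         (f4 * (1 - γ) ^ n₁) := by
  rw [σ4_eq_xMatrix, AD2_iterate_xMatrix h0 h1, σ4_eq_xMatrix]
  congr 1 <;> push_cast <;> ring
end
end
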